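/- The matrix M₊ = U Λ₊ Uᵀ obtained by truncating the negative eigenvalues of a symmetric matrix M = U Λ Uᵀ is the closest positive semi-definite matrix to M in Frobenius norm: for every positive semi-definite matrix P, ‖M − M₊‖_F ≤ ‖M − P‖_F. -/

import Mathlib

/-!
Conjugation by an orthogonal matrix preserves the sum of squared entries, so after replacing `P` by
`Q = Uᵀ P U` (again positive semidefinite) it suffices to compare `Λ - Λ₊` with `Λ - Q`. The former
is diagonal, and entrywise on the diagonal `(λ - max λ 0)² ≤ (λ - q)²` because `Q` has a nonnegative
diagonal; the off-diagonal entries of `Λ - Q` only add to the right-hand side.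
-/

open Matrix

theorem sq_sub_max_zero_le {R : Type*} [CommRing R] [LinearOrder R] [IsStrictOrderedRing R]
    {a q : R} (hq : 0 ≤ q) : (a - max a 0) ^ 2 ≤ (a - q) ^ 2 := by
  rcases le_or_gt 0 a with ha | ha
  · simpa [max_eq_left ha] using sq_nonneg (a - q)
  · rw [max_eq_right ha.le]
    nlinarith

namespace Matrix

variable {n R : Type*} [Fintype n]

theorem sum_sum_sq_eq_trace_transpose_mul [CommSemiring R] (A : Matrix n n R) :
    ∑ i, ∑ j, A i j ^ 2 = (Aᵀ * A).trace := by
  rw [Finset.sum_comm]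
  simp [trace, mul_apply, sq]

theorem sum_sum_sq_conj_of_mul_transpose_eq_one [DecidableEq n] [CommRing R]
    {U : Matrix n n R} (hU : U * Uᵀ = 1) (A : Matrix n n R) :
    ∑ i, ∑ j, (U * A * Uᵀ) i j ^ 2 = ∑ i, ∑ j, A i j ^ 2 := by
  have hUt : Uᵀ * U = 1 := mul_eq_one_comm.mp hU
  have hconj : (U * A * Uᵀ)ᵀ * (U * A * Uᵀ) = U * (Aᵀ * (Uᵀ * U) * A) * Uᵀ := by
    simp only [transpose_mul, transpose_transpose, Matrix.mul_assoc]
  rw [sum_sum_sq_eq_trace_transpose_mul, sum_sum_sq_eq_trace_transpose_mul, hconj, hUt,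
    Matrix.mul_one, trace_mul_cycle, hUt, Matrix.one_mul]

theorem sum_sum_sq_diagonal [DecidableEq n] [CommSemiring R] (v : n → R) :
    ∑ i, ∑ j, diagonal v i j ^ 2 = ∑ i, v i ^ 2 := by
  refine Finset.sum_congr rfl fun i _ => ?_
  rw [Finset.sum_eq_single i (fun j _ hj => by simp [diagonal_apply_ne _ hj.symm]) (by simp),
    diagonal_apply_eq]

theorem sum_sq_diag_le_sum_sum_sq [Ring R] [LinearOrder R] [IsStrictOrderedRing R]
    (A : Matrix n n R) : ∑ i, A i i ^ 2 ≤ ∑ i, ∑ j, A i j ^ 2 :=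
  Finset.sum_le_sum fun i _ =>
    Finset.single_le_sum (f := fun j => A i j ^ 2) (fun _ _ => sq_nonneg _) (Finset.mem_univ i)

theorem sum_sum_sq_diagonal_sub_posPart_le [DecidableEq n] [CommRing R] [LinearOrder R]
    [IsStrictOrderedRing R] (Λ : n → R) {Q : Matrix n n R} (hQ : ∀ i, 0 ≤ Q i i) :
    ∑ i, ∑ j, (diagonal Λ - diagonal fun i => max (Λ i) 0) i j ^ 2 ≤
      ∑ i, ∑ j, (diagonal Λ - Q) i j ^ 2 := by
  rw [diagonal_sub, sum_sum_sq_diagonal]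
  refine le_trans (Finset.sum_le_sum fun i _ => ?_) (sum_sq_diag_le_sum_sum_sq _)
  simpa using sq_sub_max_zero_le (a := Λ i) (hQ i)

end Matrix

theorem truncated_eigendecomposition_closest_psd (d : ℕ)
    (M U : Matrix (Fin d) (Fin d) ℝ) (Λ : Fin d → ℝ)
    (hU : U * Uᵀ = 1) (hM : M = U * diagonal Λ * Uᵀ)
    (Mplus : Matrix (Fin d) (Fin d) ℝ)
    (hMplus : Mplus = U * diagonal (fun i => max (Λ i) 0) * Uᵀ)
    (P : Matrix (Fin d) (Fin d) ℝ) (hP : P.PosSemidef) :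
    Real.sqrt (∑ i, ∑ j, ((M - Mplus) i j) ^ 2) ≤
      Real.sqrt (∑ i, ∑ j, ((M - P) i j) ^ 2) := by
  set Q := Uᵀ * P * U
  have hQ : Q.PosSemidef := by simpa using hP.conjTranspose_mul_mul_same U
  have hMplus_sub : M - Mplus = U * (diagonal Λ - diagonal fun i => max (Λ i) 0) * Uᵀ := by
    rw [hM, hMplus]
    noncomm_ring
  have hP_sub : M - P = U * (diagonal Λ - Q) * Uᵀ := by
    rw [hM, show U * (diagonal Λ - Q) * Uᵀ = U * diagonal Λ * Uᵀ - (U * Uᵀ) * P * (U * Uᵀ) by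
      simp only [Q]; noncomm_ring, hU, Matrix.one_mul, Matrix.mul_one]
  rw [hMplus_sub, hP_sub, sum_sum_sq_conj_of_mul_transpose_eq_one hU,
    sum_sum_sq_conj_of_mul_transpose_eq_one hU]
  exact Real.sqrt_le_sqrt (sum_sum_sq_diagonal_sub_posPart_le Λ fun _ => hQ.diag_nonneg)
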